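/- Let Σ be a finite alphabet of size q ≥ 2, n ≥ 1, δ ∈ (0,1), and set α = (1 − 1/q)(1 + δ). Consider a finitary watermarking scheme with fixed prompt x̄, finite key space K with a probability distribution, randomized output map Model_κ producing strings in Σ^n, and detection map Detect : K × Σ^n → {true, false}. Suppose soundness error ε_s: for every fixed ŷ ∈ Σ^n, P_κ[Detect(κ, ŷ) = true] ≤ ε_s. Let f be the truncated uniform resampler with budget αn applied to y drawn from Model_κ(x̄), and suppose robustness error ε_r: P[Detect(κ, f(y)) = false ∧ f(y) ≠ y] ≤ ε_r. Then ε_s + ε_r ≥ 1 − q^{−n} − exp(−δ²(1 − 1/q)n/3). In particular, no watermarking scheme with fixed-length outputs can have both negligible soundness error and negligible robustness error against tampering at rate (1 − 1/q)(1 + δ). -/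

import Mathlib

/-!
Resample an honest output `γ = Model κ s` to a uniform `U`. Apart from `U = γ` (probability
`q⁻ⁿ`) and `U` far from `γ` (its Hamming distance to `γ` is Binomial(n, 1 - 1/q), so a Chernoff
bound gives probability at most `exp(-δ²(1 - 1/q)n/3)`), the resampler outputs `U ≠ γ`. Then
either `Detect κ U` fails, a robustness error, or it succeeds; since `U` is independent of `κ`,
soundness bounds the latter by `εs`. A union bound over these four events gives the claim.
-/

open Finset Classical

/-- The truncated uniform resampler with budget `b`: on codeword `γ` and uniform
randomness `u`, it outputs `u` if `dist(u, γ) ≤ b` and `γ` otherwise. -/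
noncomputable def resample {S : Type} [Fintype S] [DecidableEq S] {n : ℕ}
    (b : ℝ) (γ u : Fin n → S) : Fin n → S :=
  if (hammingDist u γ : ℝ) ≤ b then u else γ

open Real

section Hamming

variable {S : Type*} [Fintype S] [DecidableEq S] {n : ℕ}

theorem sum_ite_ne_eq {R : Type*} [CommRing R] (a : S) (c : R) :
    ∑ x : S, (if x ≠ a then c else 1) = (Fintype.card S - 1) * c + 1 := by
  have h : ∀ x : S, (if x ≠ a then c else 1) = c + if x = a then 1 - c else 0 := by
    intro x
    by_cases hx : x = a <;> simp [hx]
  simp only [h, sum_add_distrib, sum_const, sum_ite_eq', mem_univ, if_true, card_univ,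
    nsmul_eq_mul]
  ring

theorem sum_pow_hammingDist {R : Type*} [CommRing R] (y : Fin n → S) (c : R) :
    ∑ u : Fin n → S, c ^ hammingDist u y = ((Fintype.card S - 1) * c + 1) ^ n := by
  calc ∑ u : Fin n → S, c ^ hammingDist u y
      = ∑ u : Fin n → S, ∏ i, if u i ≠ y i then c else 1 := by
        simp only [hammingDist, ← prod_filter, prod_const]
    _ = ∏ i, ∑ x : S, if x ≠ y i then c else 1 :=
        (Fintype.prod_sum fun i (x : S) => if x ≠ y i then c else 1).symm
    _ = _ := by simp only [sum_ite_ne_eq, prod_const, card_univ, Fintype.card_fin]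

theorem card_lt_hammingDist_le (y : Fin n → S) (b : ℝ) {t : ℝ} (ht : 0 ≤ t) :
    (#{u | b < hammingDist u y} : ℝ)
      ≤ exp (-(t * b)) * ((Fintype.card S - 1) * exp t + 1) ^ n := by
  calc (#{u | b < hammingDist u y} : ℝ) = ∑ u, if b < hammingDist u y then 1 else 0 :=
        natCast_card_filter _ _
    _ ≤ ∑ u, exp (-(t * b)) * exp t ^ hammingDist u y := by
        gcongr with u
        rw [← exp_nat_mul, ← exp_add]
        split_ifs with h
        · exact one_le_exp (by nlinarith)
        · positivity
    _ = _ := by rw [← mul_sum, sum_pow_hammingDist]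

-- `4δ/5` replaces the optimal Chernoff parameter `log (1 + δ)`, which avoids logarithms.
theorem exp_four_fifths_le {δ : ℝ} (hδ0 : 0 ≤ δ) (hδ1 : δ ≤ 1) :
    exp (4 * δ / 5) ≤ 1 + 4 * δ / 5 * (1 + δ) - δ ^ 2 / 3 := by
  have h := exp_bound' (x := 4 * δ / 5) (by positivity) (by linarith) (n := 3) (by norm_num)
  norm_num [sum_range_succ, Nat.factorial] at h
  nlinarith [pow_le_pow_left₀ hδ0 hδ1 3]

theorem card_lt_hammingDist_le_exp [Nonempty S] (y : Fin n → S) {δ : ℝ} (hδ0 : 0 ≤ δ)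
    (hδ1 : δ ≤ 1) :
    (#{u | (1 - (Fintype.card S : ℝ)⁻¹) * (1 + δ) * n < hammingDist u y} : ℝ)
      ≤ (Fintype.card S : ℝ) ^ n * exp (-(δ ^ 2 * (1 - (Fintype.card S : ℝ)⁻¹) * n / 3)) := by
  set q : ℝ := (Fintype.card S : ℝ)
  set p : ℝ := 1 - q⁻¹
  set t : ℝ := 4 * δ / 5
  have hq : 1 ≤ q := Nat.one_le_cast.2 Fintype.card_pos
  have hp : 0 ≤ p := sub_nonneg.2 (inv_le_one_of_one_le₀ hq)
  have hbase : (q - 1) * exp t + 1 = q * (1 + p * (exp t - 1)) := by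
    simp only [p]
    field_simp
    ring
  have ht : exp t ≤ 1 + t * (1 + δ) - δ ^ 2 / 3 := exp_four_fifths_le hδ0 hδ1
  have hkey : p * (exp t - 1 - t * (1 + δ)) ≤ p * -(δ ^ 2 / 3) :=
    mul_le_mul_of_nonneg_left (by linarith) hp
  calc _ ≤ exp (-(t * (p * (1 + δ) * n))) * ((q - 1) * exp t + 1) ^ n :=
        card_lt_hammingDist_le y _ (by positivity)
    _ ≤ exp (-(t * (p * (1 + δ) * n))) * (q * exp (p * (exp t - 1))) ^ n := by
        rw [hbase]
        gcongr
        · exact mul_nonneg (by linarith) (by nlinarith [one_le_exp (show 0 ≤ t by positivity)])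
        · linarith [add_one_le_exp (p * (exp t - 1))]
    _ = q ^ n * exp (n * (p * (exp t - 1 - t * (1 + δ)))) := by
        rw [mul_pow, ← exp_nat_mul, mul_left_comm, ← exp_add]
        ring_nf
    _ ≤ q ^ n * exp (-(δ ^ 2 * p * n / 3)) := by
        gcongr
        nlinarith [mul_le_mul_of_nonneg_left hkey (Nat.cast_nonneg (α := ℝ) n)]

end Hamming

section Resample

variable {S : Type} [Fintype S] [DecidableEq S] {n : ℕ}

theorem resample_of_hammingDist_le {b : ℝ} {γ u : Fin n → S} (h : (hammingDist u γ : ℝ) ≤ b) :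
    resample b γ u = u :=
  if_pos h

theorem eq_or_far_or_detected_or_resample_evades (b : ℝ) (γ u : Fin n → S)
    (D : (Fin n → S) → Bool) :
    u = γ ∨ b < hammingDist u γ ∨ D u = true
      ∨ (D (resample b γ u) = false ∧ resample b γ u ≠ γ) := by
  by_cases hu : u = γ
  · exact .inl hu
  by_cases hfar : b < hammingDist u γ
  · exact .inr (.inl hfar)
  rw [resample_of_hammingDist_le (not_lt.1 hfar)]
  cases D u <;> simp [hu]

end Resample

theorem le_ite_add_ite_add_ite_add_ite {c : ℝ} (hc : 0 ≤ c) {P₁ P₂ P₃ P₄ : Prop}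
    [Decidable P₁] [Decidable P₂] [Decidable P₃] [Decidable P₄] (h : P₁ ∨ P₂ ∨ P₃ ∨ P₄) :
    c ≤ (if P₁ then c else 0) + (if P₂ then c else 0) + (if P₃ then c else 0)
      + (if P₄ then c else 0) := by
  split_ifs <;> first | linarith | tauto

section WeightedSum

variable {K R ι : Type*} [Fintype K] [Fintype R] [Fintype ι] {w : K → ℝ} {v : R → ℝ}

theorem sum_sum_mul_mul_const (hw : ∑ κ, w κ = 1) (hv : ∑ s, v s = 1) (c : ℝ) :
    ∑ κ, ∑ s, w κ * v s * c = c := by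
  simp only [← sum_mul, ← sum_mul_sum, hw, hv, one_mul]

theorem sum_sum_mul_mul_le (hw0 : ∀ κ, 0 ≤ w κ) (hv0 : ∀ s, 0 ≤ v s)
    (hw : ∑ κ, w κ = 1) (hv : ∑ s, v s = 1) {f : K → R → ℝ} {c : ℝ}
    (hf : ∀ κ s, f κ s ≤ c) :
    ∑ κ, ∑ s, w κ * v s * f κ s ≤ c :=
  (sum_le_sum fun κ _ => sum_le_sum fun s _ =>
    mul_le_mul_of_nonneg_left (hf κ s) (mul_nonneg (hw0 κ) (hv0 s))).trans_eq
    (sum_sum_mul_mul_const hw hv c)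

theorem sum_sum_sum_ite_le_of_inner (hw0 : ∀ κ, 0 ≤ w κ) (hv0 : ∀ s, 0 ≤ v s)
    (hw : ∑ κ, w κ = 1) (hv : ∑ s, v s = 1) {P : K → R → ι → Prop}
    [∀ κ s, DecidablePred (P κ s)] {N c : ℝ}
    (h : ∀ κ s, ∑ u, (if P κ s u then N else 0) ≤ c) :
    ∑ κ, ∑ s, ∑ u, (if P κ s u then w κ * v s * N else 0) ≤ c := by
  simp only [← mul_ite_zero, ← mul_sum]
  exact sum_sum_mul_mul_le hw0 hv0 hw hv h

theorem sum_sum_sum_ite_le_of_outer (hv0 : ∀ s, 0 ≤ v s) (hv : ∑ s, v s = 1) {N c : ℝ}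
    (hN0 : 0 ≤ N) (hN : ∑ _u : ι, N = 1) {D : K → ι → Prop} [∀ κ, DecidablePred (D κ)]
    (h : ∀ u, ∑ κ, (if D κ u then w κ else 0) ≤ c) :
    ∑ κ, ∑ s, ∑ u, (if D κ u then w κ * v s * N else 0) ≤ c := by
  calc ∑ κ, ∑ s, ∑ u, (if D κ u then w κ * v s * N else 0)
      = ∑ s, ∑ u, v s * N * ∑ κ, (if D κ u then w κ else 0) := by
        rw [sum_comm]
        refine sum_congr rfl fun s _ => ?_
        refine sum_comm.trans (sum_congr rfl fun u _ => ?_)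
        rw [mul_sum]
        exact sum_congr rfl fun κ _ => by split_ifs <;> ring
    _ ≤ c := sum_sum_mul_mul_le hv0 (fun _ => hN0) hv hN fun _ u => h u

end WeightedSum

theorem stmt_12_general
    {S K RS : Type} [Fintype S] [DecidableEq S] [Fintype K]
    [Fintype RS]
    {n : ℕ} (hq : 2 ≤ Fintype.card S)
    (δ : ℝ) (hδ0 : 0 < δ) (hδ1 : δ < 1)
    (w : K → ℝ) (hw0 : ∀ κ, 0 ≤ w κ) (hw1 : ∑ κ, w κ = 1)
    (ws : RS → ℝ) (hws0 : ∀ s, 0 ≤ ws s) (hws1 : ∑ s, ws s = 1)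
    (Model : K → RS → Fin n → S) (Detect : K → (Fin n → S) → Bool)
    (εs εr : ℝ)
    (hsound : ∀ y : Fin n → S,
      (∑ κ, if Detect κ y = true then w κ else 0) ≤ εs)
    (hrobust :
      (∑ κ, ∑ s, ∑ u : Fin n → S,
        if Detect κ (resample ((1 - (Fintype.card S : ℝ)⁻¹) * (1 + δ) * n)
              (Model κ s) u) = false
           ∧ resample ((1 - (Fintype.card S : ℝ)⁻¹) * (1 + δ) * n) (Model κ s) u
              ≠ Model κ s
        then w κ * ws s * ((Fintype.card S : ℝ) ^ n)⁻¹ else 0) ≤ εr) :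
    1 - ((Fintype.card S : ℝ) ^ n)⁻¹
      - Real.exp (-(δ ^ 2 * (1 - (Fintype.card S : ℝ)⁻¹) * n / 3)) ≤ εs + εr := by
  have : Nonempty S := Fintype.card_pos_iff.1 (by omega)
  set b : ℝ := (1 - (Fintype.card S : ℝ)⁻¹) * (1 + δ) * n
  set N : ℝ := ((Fintype.card S : ℝ) ^ n)⁻¹
  have hN0 : 0 ≤ N := by positivity
  have hN : ∑ _u : Fin n → S, N = 1 := by simp [N]
  have hequal : ∑ κ, ∑ s, ∑ u : Fin n → S,
      (if u = Model κ s then w κ * ws s * N else 0) ≤ N :=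
    sum_sum_sum_ite_le_of_inner hw0 hws0 hw1 hws1 fun κ s => by simp
  have hfar : ∑ κ, ∑ s, ∑ u : Fin n → S,
      (if b < hammingDist u (Model κ s) then w κ * ws s * N else 0)
        ≤ exp (-(δ ^ 2 * (1 - (Fintype.card S : ℝ)⁻¹) * n / 3)) := by
    refine sum_sum_sum_ite_le_of_inner hw0 hws0 hw1 hws1 fun κ s => ?_
    rw [← sum_filter, sum_const, nsmul_eq_mul, ← div_eq_mul_inv, div_le_iff₀' (by positivity)]
    exact card_lt_hammingDist_le_exp _ hδ0.le hδ1.le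
  have hdetect : ∑ κ, ∑ s, ∑ u : Fin n → S,
      (if Detect κ u = true then w κ * ws s * N else 0) ≤ εs :=
    sum_sum_sum_ite_le_of_outer hws0 hws1 hN0 hN hsound
  have hmass : ∑ κ, ∑ s, ∑ _u : Fin n → S, w κ * ws s * N = 1 := by
    simp only [← mul_sum, hN, sum_sum_mul_mul_const hw1 hws1]
  have hcover := hmass.symm.le.trans <| sum_le_sum fun κ _ => sum_le_sum fun s _ =>
    sum_le_sum fun u _ =>
      le_ite_add_ite_add_ite_add_ite (mul_nonneg (mul_nonneg (hw0 κ) (hws0 s)) hN0)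
        (eq_or_far_or_detected_or_resample_evades b (Model κ s) u (Detect κ))
  simp only [sum_add_distrib] at hcover
  linarith

/-- For a watermarking scheme with fixed prompt over an alphabet of
size `q ≥ 2` with fixed-length outputs in `Σ^n`, soundness error `εs`, and robustness
error `εr` against the truncated uniform resampler with budget `α·n` where
`α = (1 - 1/q)(1 + δ)`, `δ ∈ (0,1)`, we have
`εs + εr ≥ 1 - q^(-n) - exp(-δ²(1 - 1/q)n/3)`. -/
theorem stmt_12
    {S K RS : Type} [Fintype S] [DecidableEq S] [Fintype K] [Nonempty K]
    [Fintype RS] [Nonempty RS]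
    {n : ℕ} (hn : 1 ≤ n) (hq : 2 ≤ Fintype.card S)
    (δ : ℝ) (hδ0 : 0 < δ) (hδ1 : δ < 1)
    (w : K → ℝ) (hw0 : ∀ κ, 0 ≤ w κ) (hw1 : ∑ κ, w κ = 1)
    (ws : RS → ℝ) (hws0 : ∀ s, 0 ≤ ws s) (hws1 : ∑ s, ws s = 1)
    (Model : K → RS → Fin n → S) (Detect : K → (Fin n → S) → Bool)
    (εs εr : ℝ)
    (hsound : ∀ y : Fin n → S,
      (∑ κ, if Detect κ y = true then w κ else 0) ≤ εs)
    (hrobust :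
      (∑ κ, ∑ s, ∑ u : Fin n → S,
        if Detect κ (resample ((1 - (Fintype.card S : ℝ)⁻¹) * (1 + δ) * n)
              (Model κ s) u) = false
           ∧ resample ((1 - (Fintype.card S : ℝ)⁻¹) * (1 + δ) * n) (Model κ s) u
              ≠ Model κ s
        then w κ * ws s * ((Fintype.card S : ℝ) ^ n)⁻¹ else 0) ≤ εr) :
    1 - ((Fintype.card S : ℝ) ^ n)⁻¹
      - Real.exp (-(δ ^ 2 * (1 - (Fintype.card S : ℝ)⁻¹) * n / 3)) ≤ εs + εr :=
  stmt_12_general hq δ hδ0 hδ1 w hw0 hw1 ws hws0 hws1 Model Detect εs εr hsound hrobust
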